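/- arXiv:1712.08592 — 2 statements merged into one kernel-verified Lean document; each statement's English description precedes it below -/
import Mathlib

section
/- Let (p_n) and (q_n) be Nörlund sequences and let C_{pq} be the matrix method with entries c_{m,n} = k_{m-n} P_n / Q_m (n ≤ m), 0 otherwise, where (k_n) are the comparison coefficients. If C_{pq} is regular (maps every convergent sequence to a sequence converging to the same limit), then (N,q) includes (N,p): every sequence r with N^p r → σ satisfies N^q r → σ. -/
/-! Writing `t = N^p r`, the identity `Σ_{n ≤ m} k_{m-n} P_n t_n = Σ_{j ≤ m} q_{m-j} r_j`
says that `C_{pq} t = N^q r`; in generating functions it is the associativity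
`(r p) k = r (k p) = r q`. Regularity of `C_{pq}` then carries `t → σ` to `N^q r → σ`. -/

open Finset PowerSeries

theorem PowerSeries.coeff_mk_mul_mk {R : Type*} [CommSemiring R] (a b : ℕ → R) (n : ℕ) :
    coeff n (mk a * mk b) = ∑ j ∈ range (n + 1), a j * b (n - j) := by
  simp only [coeff_mul, coeff_mk, Nat.sum_antidiagonal_eq_sum_range_succ fun i j => a i * b j]

theorem sum_range_conv_assoc {R : Type*} [CommSemiring R] (p q k r : ℕ → R)
    (hk : ∀ n, q n = ∑ j ∈ range (n + 1), k j * p (n - j)) (m : ℕ) :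
    ∑ n ∈ range (m + 1), k (m - n) * ∑ j ∈ range (n + 1), p (n - j) * r j =
      ∑ j ∈ range (m + 1), q (m - j) * r j := by
  have conv : ∀ (a b : ℕ → R) n,
      ∑ j ∈ range (n + 1), a (n - j) * b j = coeff n (mk b * mk a) := by
    intro a b n
    simp only [coeff_mk_mul_mk, mul_comm (a _)]
  have hq : mk q = mk k * mk p := by
    ext n
    rw [coeff_mk, coeff_mk_mul_mk, hk]
  have hN : mk (fun n => ∑ j ∈ range (n + 1), p (n - j) * r j) = mk r * mk p := by
    ext n
    rw [coeff_mk, conv]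
  rw [conv, conv, hq, hN, mul_assoc, mul_comm (mk p)]

theorem sum_range_pos_of_zero_pos {M : Type*} [AddCommMonoid M] [PartialOrder M]
    [IsOrderedCancelAddMonoid M] {p : ℕ → M} (hp0 : 0 < p 0)
    (hp : ∀ n, 0 < n → 0 ≤ p n) (n : ℕ) :
    0 < ∑ i ∈ range (n + 1), p i :=
  sum_pos' (fun i _ => (Nat.eq_zero_or_pos i).elim (fun h => h ▸ hp0.le) (hp i))
    ⟨0, mem_range.mpr n.succ_pos, hp0⟩

theorem matrix_regular_implies_inclusion_general
    (p q k : ℕ → ℝ)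
    (hp0 : 0 < p 0) (hp : ∀ n, 0 < n → 0 ≤ p n)
    (hk : ∀ n, q n = ∑ j ∈ Finset.range (n + 1), k j * p (n - j))
    (P Q : ℕ → ℝ)
    (hP : ∀ n, P n = ∑ i ∈ Finset.range (n + 1), p i)
    (c : ℕ → ℕ → ℝ)
    (hc : ∀ m n, c m n = if n ≤ m then k (m - n) * P n / Q m else 0)
    (hreg : ∀ (s : ℕ → ℝ) (σ : ℝ), Filter.Tendsto s Filter.atTop (nhds σ) →
      Filter.Tendsto (fun m => ∑ n ∈ Finset.range (m + 1), c m n * s n)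
        Filter.atTop (nhds σ)) :
    ∀ (r : ℕ → ℝ) (σ : ℝ),
      Filter.Tendsto
        (fun m => (∑ j ∈ Finset.range (m + 1), p (m - j) * r j) / P m)
        Filter.atTop (nhds σ) →
      Filter.Tendsto
        (fun m => (∑ j ∈ Finset.range (m + 1), q (m - j) * r j) / Q m)
        Filter.atTop (nhds σ) := by
  intro r σ hr
  have hC : ∀ m,
      ∑ n ∈ range (m + 1), c m n * ((∑ j ∈ range (n + 1), p (n - j) * r j) / P n) =
        (∑ j ∈ range (m + 1), q (m - j) * r j) / Q m := by
    intro m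
    rw [← sum_range_conv_assoc p q k r hk, sum_div]
    refine sum_congr rfl fun n hn => ?_
    have hPn : P n ≠ 0 := hP n ▸ (sum_range_pos_of_zero_pos hp0 hp n).ne'
    rw [hc, if_pos (Nat.lt_succ_iff.mp (mem_range.mp hn))]
    field_simp
  exact (hreg _ σ hr).congr hC

theorem matrix_regular_implies_inclusion
    (p q k : ℕ → ℝ)
    (hp0 : 0 < p 0) (hp : ∀ n, 0 < n → 0 ≤ p n)
    (hq0 : 0 < q 0) (hq : ∀ n, 0 < n → 0 ≤ q n)
    (hk : ∀ n, q n = ∑ j ∈ Finset.range (n + 1), k j * p (n - j))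
    (P Q : ℕ → ℝ)
    (hP : ∀ n, P n = ∑ i ∈ Finset.range (n + 1), p i)
    (hQ : ∀ n, Q n = ∑ i ∈ Finset.range (n + 1), q i)
    (c : ℕ → ℕ → ℝ)
    (hc : ∀ m n, c m n = if n ≤ m then k (m - n) * P n / Q m else 0)
    (hreg : ∀ (s : ℕ → ℝ) (σ : ℝ), Filter.Tendsto s Filter.atTop (nhds σ) →
      Filter.Tendsto (fun m => ∑ n ∈ Finset.range (m + 1), c m n * s n)
        Filter.atTop (nhds σ)) :
    ∀ (r : ℕ → ℝ) (σ : ℝ),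
      Filter.Tendsto
        (fun m => (∑ j ∈ Finset.range (m + 1), p (m - j) * r j) / P m)
        Filter.atTop (nhds σ) →
      Filter.Tendsto
        (fun m => (∑ j ∈ Finset.range (m + 1), q (m - j) * r j) / Q m)
        Filter.atTop (nhds σ) :=
  matrix_regular_implies_inclusion_general p q k hp0 hp hk P Q hP c hc hreg
end

section
/- Let (p_n), (q_n) be Nörlund sequences (p_0 > 0, p_n ≥ 0 for n > 0; similarly for q), with comparison coefficients (k_n) solving q_n = Σ_{j=0}^n k_j p_{n-j}. Then (N,q) includes (N,p) — every (N,p)-convergent sequence is (N,q)-convergent to the same limit — if and only if both: (R1) there is H ≥ 0 with Σ_{n=0}^m |k_{m-n}| P_n ≤ H Q_m for all m, and (R2) k_m/Q_m → 0. -/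
/-!
Since `q = k * p` as power series, `(N^q r)_m = ∑_{n ≤ m} c_{mn} (N^p r)_n` with the lower
triangular matrix `c_{mn} = k_{m-n} P_n / Q_m`, whose rows sum to `1` (take `r = 1`). As `p_0 ≠ 0`,
every sequence is `N^p r` for some `r`, so inclusion says exactly that `c` preserves limits. By the
Silverman–Toeplitz theorem this amounts to bounded absolute row sums, which is (R1), and null
columns. Column `0` is `k_m p_0 / Q_m`, giving (R2); conversely (R2) makes every column null
because `Q` is increasing. The necessity of bounded row sums comes from Banach–Steinhaus on
`c₀ = C₀(ℕ, ℝ)`.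
-/

open Finset Filter Topology ZeroAtInfty

namespace PowerSeries

variable {R : Type*} [CommSemiring R]

theorem coeff_mk_mul (a : ℕ → R) (φ : R⟦X⟧) (n : ℕ) :
    coeff n (mk a * φ) = ∑ j ∈ range (n + 1), a (n - j) * coeff j φ := by
  rw [coeff_mul, Nat.sum_antidiagonal_eq_sum_range_succ (fun i j => coeff i (mk a) * coeff j φ),
    ← sum_range_reflect]
  refine sum_congr rfl fun j hj => ?_
  rw [coeff_mk, Nat.succ_sub_one, Nat.sub_sub_self (Nat.lt_succ_iff.mp (mem_range.mp hj))]

end PowerSeries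

section Convolution

open PowerSeries

variable {R : Type*} [CommSemiring R]

theorem sum_range_convolution_assoc {k p q : ℕ → R}
    (hk : ∀ n, q n = ∑ j ∈ range (n + 1), k j * p (n - j)) (r : ℕ → R) (m : ℕ) :
    ∑ j ∈ range (m + 1), q (m - j) * r j =
      ∑ n ∈ range (m + 1), k (m - n) * ∑ j ∈ range (n + 1), p (n - j) * r j := by
  have hqkp : PowerSeries.mk q = PowerSeries.mk p * PowerSeries.mk k := by
    ext n
    rw [coeff_mk, hk, coeff_mk_mul]
    exact sum_congr rfl fun j _ => by rw [coeff_mk, mul_comm]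
  have := congrArg (coeff m) (congrArg (· * PowerSeries.mk r) (hqkp.trans (mul_comm _ _)))
  simp only [mul_assoc, coeff_mk_mul, coeff_mk] at this
  exact this

theorem exists_sum_range_convolution_eq {K : Type*} [Field K] {p : ℕ → K} (hp0 : p 0 ≠ 0)
    (t : ℕ → K) :
    ∃ r : ℕ → K, ∀ n, ∑ j ∈ range (n + 1), p (n - j) * r j = t n :=
  ⟨fun n => coeff n ((PowerSeries.mk p)⁻¹ * PowerSeries.mk t), fun n => by
    rw [← coeff_mk_mul, ← mul_assoc, PowerSeries.mul_inv_cancel _ (by simpa using hp0), one_mul,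
      coeff_mk]⟩

end Convolution

namespace ZeroAtInftyContinuousMap

variable (𝕜 : Type*) {α β : Type*} [TopologicalSpace α] [NormedAddCommGroup β] [NormedField 𝕜]
  [NormedSpace 𝕜 β]

noncomputable def evalCLM (x : α) : C₀(α, β) →L[𝕜] β :=
  LinearMap.mkContinuous ⟨⟨fun f => f x, fun _ _ => rfl⟩, fun _ _ => rfl⟩ 1 fun f => by
    simpa [← norm_toBCF_eq_norm] using f.toBCF.norm_coe_le_norm x

@[simp] theorem evalCLM_apply (x : α) (f : C₀(α, β)) : evalCLM 𝕜 x f = f x := rfl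

end ZeroAtInftyContinuousMap

section Toeplitz

variable {c : ℕ → ℕ → ℝ}

theorem tendsto_column_of_tendsto_sum_mul
    (hc : ∀ x : ℕ → ℝ, Tendsto x atTop (𝓝 0) →
      Tendsto (fun m => ∑ n ∈ range (m + 1), c m n * x n) atTop (𝓝 0)) (n : ℕ) :
    Tendsto (fun m => c m n) atTop (𝓝 0) := by
  have hδ : Tendsto (Pi.single n 1 : ℕ → ℝ) atTop (𝓝 0) :=
    tendsto_const_nhds.congr' <| (eventually_gt_atTop n).mono fun j hj => by
      simp [hj.ne']
  refine (hc _ hδ).congr' <| (eventually_ge_atTop n).mono fun m hm => ?_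
  simp [Pi.single_apply, Nat.lt_succ_of_le hm]

theorem exists_norm_le_one_sum_mul_eq_sum_abs (a : ℕ → ℝ) (m : ℕ) :
    ∃ x : C₀(ℕ, ℝ), ‖x‖ ≤ 1 ∧ ∑ n ∈ range (m + 1), a n * x n = ∑ n ∈ range (m + 1), |a n| := by
  let s : ℕ → ℝ := fun n => if n ≤ m then SignType.sign (a n) else 0
  have hs : Tendsto s atTop (𝓝 0) :=
    tendsto_const_nhds.congr' <| (eventually_gt_atTop m).mono fun n hn => by simp [s, hn.not_ge]
  refine ⟨⟨⟨s, continuous_of_discreteTopology⟩, cocompact_eq_atTop (α := ℕ) ▸ hs⟩, ?_, ?_⟩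
  · rw [← ZeroAtInftyContinuousMap.norm_toBCF_eq_norm,
      BoundedContinuousFunction.norm_le zero_le_one]
    intro n
    change ‖s n‖ ≤ 1
    simp only [s]
    split_ifs
    · cases SignType.sign (a n) <;> simp
    · simp
  · refine sum_congr rfl fun n hn => ?_
    simp [s, Nat.lt_succ_iff.mp (mem_range.mp hn)]

theorem exists_sum_abs_le_of_tendsto_sum_mul
    (hc : ∀ x : ℕ → ℝ, Tendsto x atTop (𝓝 0) →
      Tendsto (fun m => ∑ n ∈ range (m + 1), c m n * x n) atTop (𝓝 0)) :
    ∃ H, ∀ m, ∑ n ∈ range (m + 1), |c m n| ≤ H := by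
  let row (m : ℕ) : C₀(ℕ, ℝ) →L[ℝ] ℝ :=
    ∑ n ∈ range (m + 1), c m n • ZeroAtInftyContinuousMap.evalCLM ℝ n
  have hrow (m : ℕ) (x : C₀(ℕ, ℝ)) : row m x = ∑ n ∈ range (m + 1), c m n * x n := by
    simp [row]
  have hbdd (x : C₀(ℕ, ℝ)) : ∃ C, ∀ m, ‖row m x‖ ≤ C := by
    have hx : Tendsto x atTop (𝓝 0) := cocompact_eq_atTop (α := ℕ) ▸ x.zero_at_infty'
    obtain ⟨C, hC⟩ := (hc x hx).norm.bddAbove_range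
    exact ⟨C, fun m => by rw [hrow]; exact hC ⟨m, rfl⟩⟩
  obtain ⟨C, hC⟩ := banach_steinhaus hbdd
  refine ⟨C, fun m => ?_⟩
  obtain ⟨x, hx, hrow_x⟩ := exists_norm_le_one_sum_mul_eq_sum_abs (c m) m
  calc ∑ n ∈ range (m + 1), |c m n| ≤ ‖row m x‖ := hrow m x ▸ hrow_x ▸ le_abs_self _
    _ ≤ C * ‖x‖ := (row m).le_of_opNorm_le (hC m) x
    _ ≤ C := mul_le_of_le_one_right ((norm_nonneg _).trans (hC 0)) hx

theorem tendsto_sum_mul_of_tendsto_zero {ε : ℕ → ℝ} {H : ℝ}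
    (hH : ∀ m, ∑ n ∈ range (m + 1), |c m n| ≤ H)
    (hcol : ∀ n, Tendsto (fun m => c m n) atTop (𝓝 0)) (hε : Tendsto ε atTop (𝓝 0)) :
    Tendsto (fun m => ∑ n ∈ range (m + 1), c m n * ε n) atTop (𝓝 0) := by
  have hH0 : 0 ≤ H := (sum_nonneg fun _ _ => abs_nonneg _).trans (hH 0)
  rw [Metric.tendsto_atTop]
  intro δ hδ
  set η := δ / (2 * (H + 1))
  have hηH : H * η < δ / 2 := by
    rw [mul_div_assoc', div_lt_div_iff₀ (by positivity) two_pos]; nlinarith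
  obtain ⟨N, hN⟩ := Metric.tendsto_atTop.mp hε η (by positivity)
  have hhead : Tendsto (fun m => ∑ n ∈ range N, c m n * ε n) atTop (𝓝 0) := by
    simpa using tendsto_finsetSum (range N) fun n _ => (hcol n).mul_const (ε n)
  obtain ⟨M, hM⟩ := Metric.tendsto_atTop.mp hhead (δ / 2) (half_pos hδ)
  refine ⟨max M N, fun m hm => ?_⟩
  have htail : |∑ n ∈ Ico N (m + 1), c m n * ε n| ≤ H * η :=
    calc |∑ n ∈ Ico N (m + 1), c m n * ε n| ≤ ∑ n ∈ Ico N (m + 1), |c m n| * η :=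
          (abs_sum_le_sum_abs _ _).trans <| sum_le_sum fun n hn => by
            rw [abs_mul]
            have := hN n (mem_Ico.mp hn).1
            rw [Real.dist_eq, sub_zero] at this
            exact mul_le_mul_of_nonneg_left this.le (abs_nonneg _)
      _ ≤ (∑ n ∈ range (m + 1), |c m n|) * η := by
          rw [← sum_mul]
          refine mul_le_mul_of_nonneg_right (sum_le_sum_of_subset_of_nonneg ?_
            fun _ _ _ => abs_nonneg _) (by positivity)
          rw [range_eq_Ico]
          exact Ico_subset_Ico_left N.zero_le
      _ ≤ H * η := by gcongr; exact hH m
  have hhead' := hM m (le_of_max_le_left hm)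
  rw [Real.dist_eq, sub_zero] at hhead' ⊢
  rw [← sum_range_add_sum_Ico _ (by omega : N ≤ m + 1)]
  calc _ ≤ |∑ n ∈ range N, c m n * ε n| + |∑ n ∈ Ico N (m + 1), c m n * ε n| := abs_add_le _ _
    _ < δ := by linarith

theorem tendsto_sum_mul_of_toeplitz {t : ℕ → ℝ} {σ H : ℝ}
    (hH : ∀ m, ∑ n ∈ range (m + 1), |c m n| ≤ H)
    (hcol : ∀ n, Tendsto (fun m => c m n) atTop (𝓝 0))
    (hrow : Tendsto (fun m => ∑ n ∈ range (m + 1), c m n) atTop (𝓝 1))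
    (ht : Tendsto t atTop (𝓝 σ)) :
    Tendsto (fun m => ∑ n ∈ range (m + 1), c m n * t n) atTop (𝓝 σ) := by
  have hnull := tendsto_sum_mul_of_tendsto_zero hH hcol (sub_self σ ▸ ht.sub_const σ)
  have := hnull.add (hrow.mul_const σ)
  simp only [zero_add, one_mul, sum_mul, ← sum_add_distrib] at this
  exact this.congr fun m => sum_congr rfl fun n _ => by ring

end Toeplitz

section Norlund

variable {p q k P Q : ℕ → ℝ}

theorem sum_range_succ_pos (hp0 : 0 < p 0) (hp : ∀ n, 0 < n → 0 ≤ p n) (n : ℕ) :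
    0 < ∑ i ∈ range (n + 1), p i := by
  rw [sum_range_succ']
  exact add_pos_of_nonneg_of_pos (sum_nonneg fun i _ => hp _ i.succ_pos) hp0

theorem monotone_sum_range_succ (hp : ∀ n, 0 < n → 0 ≤ p n) :
    Monotone fun n => ∑ i ∈ range (n + 1), p i :=
  monotone_nat_of_le_succ fun n => by
    simpa [sum_range_succ _ (n + 1)] using hp (n + 1) n.succ_pos

theorem sum_mul_partialSum_eq_partialSum
    (hk : ∀ n, q n = ∑ j ∈ range (n + 1), k j * p (n - j))
    (hP : ∀ n, P n = ∑ i ∈ range (n + 1), p i) (hQ : ∀ n, Q n = ∑ i ∈ range (n + 1), q i)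
    (m : ℕ) : ∑ n ∈ range (m + 1), k (m - n) * P n = Q m := by
  have hreflect (f : ℕ → ℝ) (n : ℕ) :
      ∑ j ∈ range (n + 1), f (n - j) = ∑ j ∈ range (n + 1), f j := by
    simpa using sum_range_reflect f (n + 1)
  have := sum_range_convolution_assoc hk (fun _ => 1) m
  simp only [mul_one, hreflect] at this
  simp only [hP, hQ, this]

theorem norlund_eq_sum_mul_norlund (hk : ∀ n, q n = ∑ j ∈ range (n + 1), k j * p (n - j))
    (hP : ∀ n, P n ≠ 0) (r : ℕ → ℝ) (m : ℕ) :
    (∑ j ∈ range (m + 1), q (m - j) * r j) / Q m =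
      ∑ n ∈ range (m + 1),
        k (m - n) * P n / Q m * ((∑ j ∈ range (n + 1), p (n - j) * r j) / P n) := by
  rw [sum_range_convolution_assoc hk, sum_div]
  exact sum_congr rfl fun n _ => by field_simp [hP n]

theorem tendsto_sum_mul_of_norlund_inclusion
    (hk : ∀ n, q n = ∑ j ∈ range (n + 1), k j * p (n - j)) (hp0 : p 0 ≠ 0) (hP : ∀ n, P n ≠ 0)
    (hinc : ∀ (r : ℕ → ℝ) (σ : ℝ),
      Tendsto (fun m => (∑ j ∈ range (m + 1), p (m - j) * r j) / P m) atTop (𝓝 σ) →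
      Tendsto (fun m => (∑ j ∈ range (m + 1), q (m - j) * r j) / Q m) atTop (𝓝 σ))
    (x : ℕ → ℝ) (hx : Tendsto x atTop (𝓝 0)) :
    Tendsto (fun m => ∑ n ∈ range (m + 1), k (m - n) * P n / Q m * x n) atTop (𝓝 0) := by
  obtain ⟨r, hr⟩ := exists_sum_range_convolution_eq hp0 fun n => P n * x n
  have hpr (n : ℕ) : (∑ j ∈ range (n + 1), p (n - j) * r j) / P n = x n := by
    rw [hr, mul_div_cancel_left₀ _ (hP n)]
  simpa only [norlund_eq_sum_mul_norlund hk hP, hpr] using hinc r 0 (by simpa only [hpr] using hx)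

theorem tendsto_comparison_column (hQ : ∀ n, 0 < Q n) (hQmono : Monotone Q)
    (hkQ : Tendsto (fun m => k m / Q m) atTop (𝓝 0)) (n : ℕ) :
    Tendsto (fun m => k (m - n) * P n / Q m) atTop (𝓝 0) := by
  have hbound : Tendsto (fun m => |k (m - n) / Q (m - n)| * |P n|) atTop (𝓝 0) := by
    simpa using ((hkQ.comp (tendsto_sub_atTop_nat n)).abs).mul_const |P n|
  refine squeeze_zero_norm (fun m => ?_) hbound
  rw [Real.norm_eq_abs, abs_div, abs_div, abs_mul, abs_of_pos (hQ m), abs_of_pos (hQ _),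
    div_mul_eq_mul_div]
  exact div_le_div_of_nonneg_left (by positivity) (hQ _) (hQmono (m.sub_le n))

end Norlund

theorem norlund_inclusion_iff_riesz_conditions
    (p q k : ℕ → ℝ)
    (hp0 : 0 < p 0) (hp : ∀ n, 0 < n → 0 ≤ p n)
    (hq0 : 0 < q 0) (hq : ∀ n, 0 < n → 0 ≤ q n)
    (hk : ∀ n, q n = ∑ j ∈ Finset.range (n + 1), k j * p (n - j))
    (P Q : ℕ → ℝ)
    (hP : ∀ n, P n = ∑ i ∈ Finset.range (n + 1), p i)
    (hQ : ∀ n, Q n = ∑ i ∈ Finset.range (n + 1), q i) :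
    (∀ (r : ℕ → ℝ) (σ : ℝ),
      Filter.Tendsto
        (fun m => (∑ j ∈ Finset.range (m + 1), p (m - j) * r j) / P m)
        Filter.atTop (nhds σ) →
      Filter.Tendsto
        (fun m => (∑ j ∈ Finset.range (m + 1), q (m - j) * r j) / Q m)
        Filter.atTop (nhds σ)) ↔
    ((∃ H : ℝ, 0 ≤ H ∧
        ∀ m, ∑ n ∈ Finset.range (m + 1), |k (m - n)| * P n ≤ H * Q m) ∧
      Filter.Tendsto (fun m => k m / Q m) Filter.atTop (nhds 0)) := by
  have hPpos (n : ℕ) : 0 < P n := hP n ▸ sum_range_succ_pos hp0 hp n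
  have hPne (n : ℕ) : P n ≠ 0 := (hPpos n).ne'
  have hQpos (n : ℕ) : 0 < Q n := hQ n ▸ sum_range_succ_pos hq0 hq n
  have hQmono : Monotone Q := funext hQ ▸ monotone_sum_range_succ hq
  have hrow_abs (m : ℕ) : ∑ n ∈ range (m + 1), |k (m - n) * P n / Q m| =
      (∑ n ∈ range (m + 1), |k (m - n)| * P n) / Q m := by
    simp [sum_div, abs_div, abs_mul, abs_of_pos (hPpos _), abs_of_pos (hQpos m)]
  constructor
  · intro hinc
    have hnull := tendsto_sum_mul_of_norlund_inclusion hk hp0.ne' hPne hinc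
    obtain ⟨H, hH⟩ := exists_sum_abs_le_of_tendsto_sum_mul hnull
    refine ⟨⟨H, (sum_nonneg fun _ _ => abs_nonneg _).trans (hH 0), fun m => ?_⟩, ?_⟩
    · rw [← div_le_iff₀ (hQpos m), ← hrow_abs]
      exact hH m
    · have := (tendsto_column_of_tendsto_sum_mul hnull 0).div_const (P 0)
      simpa [hPne 0, mul_div_right_comm] using this
  · rintro ⟨⟨H, -, hR1⟩, hR2⟩ r σ hr
    have hrow : Tendsto (fun m => ∑ n ∈ range (m + 1), k (m - n) * P n / Q m) atTop (𝓝 1) :=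
      tendsto_const_nhds.congr fun m => by
        rw [← sum_div, sum_mul_partialSum_eq_partialSum hk hP hQ, div_self (hQpos m).ne']
    have hbdd (m : ℕ) : ∑ n ∈ range (m + 1), |k (m - n) * P n / Q m| ≤ H := by
      rw [hrow_abs, div_le_iff₀ (hQpos m)]
      exact hR1 m
    exact (tendsto_sum_mul_of_toeplitz hbdd (tendsto_comparison_column hQpos hQmono hR2) hrow
      hr).congr fun m => (norlund_eq_sum_mul_norlund hk hPne r m).symm
end
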